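/- For every n ≥ 1, E_{2,n}(x) = (1/2)(2x+1)·E_{1,n}(x) + (1/2)·E_{1,n-1}(x), where E_{1,m} = C_m is the m-th cross-polynomial and E_{2,n} is defined via its generating function Σ_{k≥0} E_{2,n}(k) t^k = h*_{2,n}(t)/(1-t)^{n+2} with h*_{2,n}(t) = (1+t)^{n+1} + 2(n-1)·t·(1+t)^{n-1}. -/

import Mathlib

open Polynomial PowerSeries

/-- The polynomial `binom(n + x - k, n)` in the variable `x`. -/
noncomputable def binomPoly (n k : ℕ) : Polynomial ℚ :=
  Polynomial.C ((n.factorial : ℚ)⁻¹) *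
    ∏ j ∈ Finset.range n, (Polynomial.X + Polynomial.C ((n : ℚ) - k - j))

/-- The `n`-th cross-polynomial `C_n = E_{1,n}`. -/
noncomputable def crossPoly (n : ℕ) : Polynomial ℚ :=
  ∑ j ∈ Finset.range (n + 1), Polynomial.C (n.choose j : ℚ) * binomPoly n j

open Finset

/-- Generating series of `k ↦ binom(n+k, n)`. -/
noncomputable def Hs (n : ℕ) : PowerSeries ℚ := PowerSeries.mk fun k => ((n + k).choose n : ℚ)

lemma Hs_succ_mul (n : ℕ) : Hs (n + 1) * (1 - PowerSeries.X) = Hs n := by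
  have h : Hs (n+1) * (1 - PowerSeries.X) = Hs (n+1) - Hs (n+1) * PowerSeries.X := by ring
  rw [h]
  ext k
  cases k with
  | zero => simp [Hs]
  | succ k =>
    simp only [map_sub, Hs, PowerSeries.coeff_succ_mul_X, coeff_mk]
    have h2 : ((n + 1 + (k+1)).choose (n+1) : ℚ)
        = ((n + (k+1)).choose n : ℚ) + ((n + 1 + k).choose (n+1) : ℚ) := by
      norm_cast
      rw [show n + 1 + (k+1) = (n+1+k)+1 by omega, Nat.choose_succ_succ,
        show n+1+k = n+(k+1) by omega]
    rw [h2]; ring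

lemma Hs_mul (n : ℕ) : Hs n * (1 - PowerSeries.X) ^ (n + 1) = 1 := by
  induction n with
  | zero =>
    rw [pow_one]
    have h : Hs 0 * (1 - PowerSeries.X) = Hs 0 - Hs 0 * PowerSeries.X := by ring
    rw [h]
    ext k
    cases k with
    | zero => simp [Hs]
    | succ k => simp [Hs]
  | succ n ih =>
    have h : Hs (n+1) * (1 - PowerSeries.X)^(n+2)
        = (Hs (n+1) * (1 - PowerSeries.X)) * (1 - PowerSeries.X)^(n+1) := by ring
    rw [h, Hs_succ_mul, ih]

lemma binomPoly_eval (n j k : ℕ) (hj : j ≤ n) :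
    (binomPoly n j).eval (k : ℚ)
      = if j ≤ k then (((n + k - j).choose n : ℕ) : ℚ) else 0 := by
  unfold binomPoly
  rw [eval_mul, eval_C, eval_prod]
  simp only [eval_add, eval_X, eval_C]
  by_cases hjk : j ≤ k
  · rw [if_pos hjk]
    have hc : ∀ i ∈ range n, (k:ℚ) + ((n:ℚ) - j - i) = (((n + k - j - i : ℕ)):ℚ) := by
      intro i hi
      have hi' : i < n := mem_range.mp hi
      have h1 : j ≤ n + k := by omega
      have h2 : i ≤ n + k - j := by omega
      rw [Nat.cast_sub h2, Nat.cast_sub h1]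
      push_cast; ring
    rw [Finset.prod_congr rfl hc, ← Nat.cast_prod,
      show (∏ i ∈ range n, (n + k - j - i)) = (n + k - j).descFactorial n from
        (Nat.descFactorial_eq_prod_range _ n).symm,
      Nat.descFactorial_eq_factorial_mul_choose, Nat.cast_mul]
    have hf : ((n.factorial : ℕ) : ℚ) ≠ 0 := by
      exact_mod_cast n.factorial_ne_zero
    field_simp
  · rw [if_neg hjk]
    apply mul_eq_zero_of_right
    apply Finset.prod_eq_zero (i := n + k - j) (mem_range.mpr (by omega))
    have h1 : j ≤ n + k := by omega
    rw [Nat.cast_sub h1]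
    push_cast; ring

lemma P1 (n j : ℕ) :
    Polynomial.X * binomPoly n j
      = Polynomial.C ((n : ℚ) + 1) * binomPoly (n+1) (j+1)
        + Polynomial.C (j : ℚ) * binomPoly n j := by
  unfold binomPoly
  rw [Finset.prod_range_succ]
  have hc : ∀ i ∈ range n,
      (Polynomial.X + Polynomial.C (((n+1 : ℕ):ℚ) - ((j+1 : ℕ):ℚ) - i))
        = Polynomial.X + Polynomial.C ((n:ℚ) - j - i) := by
    intro i _
    congr 1
    push_cast; ring
  rw [Finset.prod_congr rfl hc]
  have hlast : Polynomial.X + Polynomial.C (((n+1 : ℕ):ℚ) - ((j+1 : ℕ):ℚ) - (n:ℚ))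
      = Polynomial.X - Polynomial.C ((j:ℚ)) := by
    have h : ((n+1 : ℕ):ℚ) - ((j+1 : ℕ):ℚ) - (n:ℚ) = -(j:ℚ) := by push_cast; ring
    rw [h, map_neg, sub_eq_add_neg]
  rw [hlast]
  have hC : Polynomial.C ((((n+1).factorial : ℕ) : ℚ)⁻¹) * Polynomial.C ((n:ℚ)+1)
      = Polynomial.C (((n.factorial : ℕ) : ℚ)⁻¹) := by
    rw [← map_mul]
    congr 1
    rw [Nat.factorial_succ]
    have h1 : ((n:ℚ)+1) ≠ 0 := by positivity
    have h2 : ((n.factorial : ℕ) : ℚ) ≠ 0 := by exact_mod_cast n.factorial_ne_zero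
    push_cast
    field_simp
  set P := ∏ i ∈ range n, (Polynomial.X + Polynomial.C ((n:ℚ) - j - i)) with hP
  linear_combination (-(P * (Polynomial.X - Polynomial.C (j:ℚ)))) * hC

lemma mk_binom (n j : ℕ) (hj : j ≤ n) :
    (PowerSeries.mk fun k => (binomPoly n j).eval (k:ℚ)) = PowerSeries.X ^ j * Hs n := by
  ext k
  rw [coeff_mk, PowerSeries.coeff_X_pow_mul', binomPoly_eval n j k hj]
  split_ifs with h
  · rw [Hs, coeff_mk, show n + k - j = n + (k - j) by omega]
  · rfl

lemma mk_sum_Cmul (s : Finset ℕ) (c : ℕ → ℚ) (f : ℕ → ℕ → ℚ) :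
    (PowerSeries.mk fun k => ∑ j ∈ s, c j * f j k)
      = ∑ j ∈ s, PowerSeries.C (c j) * PowerSeries.mk (f j) := by
  ext k
  simp [coeff_mk, PowerSeries.coeff_C_mul]

lemma mk_add2 (a b : ℚ) (g h : ℕ → ℚ) :
    (PowerSeries.mk fun k => a * g k + b * h k)
      = PowerSeries.C a * PowerSeries.mk g + PowerSeries.C b * PowerSeries.mk h := by
  ext k
  simp [coeff_mk, PowerSeries.coeff_C_mul]

lemma sum_choose_Xpow (n : ℕ) :
    ∑ j ∈ range (n+1), PowerSeries.C (n.choose j : ℚ) * PowerSeries.X ^ j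
      = (1 + PowerSeries.X) ^ n := by
  rw [add_comm (1 : PowerSeries ℚ), add_pow]
  apply Finset.sum_congr rfl
  intro j _
  rw [one_pow, mul_one, map_natCast (PowerSeries.C (R := ℚ)), mul_comm]

lemma sum_j_choose_Xpow (m : ℕ) :
    ∑ j ∈ range (m+2),
        PowerSeries.C (j : ℚ) * PowerSeries.C (((m+1).choose j : ℚ)) * PowerSeries.X ^ j
      = PowerSeries.C ((m:ℚ)+1) * PowerSeries.X * (1 + PowerSeries.X) ^ m := by
  rw [Finset.sum_range_succ']
  simp only [Nat.cast_zero, map_zero, zero_mul, add_zero, pow_zero]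
  have hstep : ∀ i ∈ range (m+1),
      PowerSeries.C ((i+1 : ℕ) : ℚ) * PowerSeries.C (((m+1).choose (i+1) : ℚ))
          * PowerSeries.X ^ (i+1)
        = (PowerSeries.C ((m:ℚ)+1) * PowerSeries.X)
            * (PowerSeries.C ((m.choose i : ℚ)) * PowerSeries.X ^ i) := by
    intro i _
    have h : ((i+1 : ℕ) : ℚ) * (((m+1).choose (i+1) : ℚ)) = ((m:ℚ)+1) * ((m.choose i : ℚ)) := by
      have hh := Nat.add_one_mul_choose_eq m i
      have h2 : ((m+1 : ℕ) : ℚ) * (m.choose i : ℚ) = ((m+1).choose (i+1) : ℚ) * ((i+1:ℕ):ℚ) := by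
        exact_mod_cast congrArg (Nat.cast : ℕ → ℚ) hh
      push_cast at h2 ⊢
      linarith [h2]
    calc PowerSeries.C ((i+1 : ℕ) : ℚ) * PowerSeries.C (((m+1).choose (i+1) : ℚ))
          * PowerSeries.X ^ (i+1)
        = PowerSeries.C (((i+1 : ℕ) : ℚ) * ((m+1).choose (i+1) : ℚ)) * PowerSeries.X ^ (i+1) := by
          rw [map_mul]
      _ = PowerSeries.C (((m:ℚ)+1) * (m.choose i : ℚ)) * PowerSeries.X ^ (i+1) := by rw [h]
      _ = _ := by rw [map_mul]; ring
  rw [Finset.sum_congr rfl hstep, ← Finset.mul_sum, sum_choose_Xpow]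

lemma mk_k_binom (n j : ℕ) (hj : j ≤ n) :
    (PowerSeries.mk fun k => (k : ℚ) * (binomPoly n j).eval (k:ℚ))
      = PowerSeries.C ((n:ℚ)+1) * (PowerSeries.X ^ (j+1) * Hs (n+1))
        + PowerSeries.C (j:ℚ) * (PowerSeries.X ^ j * Hs n) := by
  have hptw : (fun k : ℕ => (k:ℚ) * (binomPoly n j).eval (k:ℚ))
      = fun k : ℕ => ((n:ℚ)+1) * (binomPoly (n+1) (j+1)).eval (k:ℚ)
          + (j:ℚ) * (binomPoly n j).eval (k:ℚ) := by
    funext k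
    have h := congrArg (Polynomial.eval (k:ℚ)) (P1 n j)
    simpa using h
  rw [hptw, mk_add2, mk_binom (n+1) (j+1) (by omega), mk_binom n j hj]

lemma crossPoly_eval (n : ℕ) (x : ℚ) :
    (crossPoly n).eval x = ∑ j ∈ range (n+1), (n.choose j : ℚ) * (binomPoly n j).eval x := by
  simp [crossPoly, eval_finset_sum]

lemma mk_cross (n : ℕ) :
    (PowerSeries.mk fun k => (crossPoly n).eval (k:ℚ)) * (1 - PowerSeries.X)^(n+1)
      = (1 + PowerSeries.X)^n := by
  have h1 : (PowerSeries.mk fun k => (crossPoly n).eval (k:ℚ))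
      = ∑ j ∈ range (n+1), PowerSeries.C (n.choose j : ℚ) * (PowerSeries.X ^ j * Hs n) := by
    have h0 : (fun k : ℕ => (crossPoly n).eval (k:ℚ))
        = fun k : ℕ => ∑ j ∈ range (n+1), (n.choose j : ℚ) * (binomPoly n j).eval (k:ℚ) :=
      funext fun k => crossPoly_eval n k
    rw [h0, mk_sum_Cmul]
    exact Finset.sum_congr rfl fun j hj => by
      rw [mk_binom n j (by have := mem_range.mp hj; omega)]
  rw [h1, Finset.sum_mul]
  have h2 : ∀ j ∈ range (n+1),
      PowerSeries.C (n.choose j : ℚ) * (PowerSeries.X ^ j * Hs n) * (1 - PowerSeries.X)^(n+1)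
        = PowerSeries.C (n.choose j : ℚ) * PowerSeries.X ^ j := by
    intro j _
    have h := Hs_mul n
    linear_combination (PowerSeries.C (n.choose j : ℚ) * PowerSeries.X ^ j) * h
  rw [Finset.sum_congr rfl h2, sum_choose_Xpow]

lemma mk_k_cross (m : ℕ) :
    (PowerSeries.mk fun k => (k:ℚ) * (crossPoly (m+1)).eval (k:ℚ)) * (1 - PowerSeries.X)^(m+3)
      = PowerSeries.C ((((m+1):ℕ):ℚ)+1) * PowerSeries.X * (1+PowerSeries.X)^(m+1)
        + (1 - PowerSeries.X)
            * (PowerSeries.C ((m:ℚ)+1) * PowerSeries.X * (1+PowerSeries.X)^m) := by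
  have h1 : (PowerSeries.mk fun k => (k:ℚ) * (crossPoly (m+1)).eval (k:ℚ))
      = ∑ j ∈ range (m+2), PowerSeries.C ((m+1).choose j : ℚ) *
          (PowerSeries.C ((((m+1):ℕ):ℚ)+1) * (PowerSeries.X^(j+1) * Hs (m+1+1))
            + PowerSeries.C (j:ℚ) * (PowerSeries.X^j * Hs (m+1))) := by
    have h0 : (fun k : ℕ => (k:ℚ) * (crossPoly (m+1)).eval (k:ℚ))
        = fun k : ℕ => ∑ j ∈ range (m+2),
            ((m+1).choose j : ℚ) * ((k:ℚ) * (binomPoly (m+1) j).eval (k:ℚ)) := by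
      funext k
      rw [crossPoly_eval, Finset.mul_sum]
      exact Finset.sum_congr rfl fun j _ => by ring
    rw [h0, mk_sum_Cmul]
    exact Finset.sum_congr rfl fun j hj => by
      rw [mk_k_binom (m+1) j (by have := mem_range.mp hj; omega)]
  rw [h1, Finset.sum_mul]
  have h2 : ∀ j ∈ range (m+2),
      PowerSeries.C ((m+1).choose j : ℚ) *
          (PowerSeries.C ((((m+1):ℕ):ℚ)+1) * (PowerSeries.X^(j+1) * Hs (m+1+1))
            + PowerSeries.C (j:ℚ) * (PowerSeries.X^j * Hs (m+1)))
          * (1 - PowerSeries.X)^(m+3)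
        = PowerSeries.C ((((m+1):ℕ):ℚ)+1) * PowerSeries.X
              * (PowerSeries.C ((m+1).choose j : ℚ) * PowerSeries.X ^ j)
          + (1 - PowerSeries.X)
              * (PowerSeries.C (j:ℚ) * PowerSeries.C ((m+1).choose j : ℚ)
                  * PowerSeries.X ^ j) := by
    intro j _
    have e1 := Hs_mul (m+2)
    have e2 := Hs_mul (m+1)
    linear_combination
      (PowerSeries.C ((m+1).choose j : ℚ) * PowerSeries.C ((((m+1):ℕ):ℚ)+1)
        * PowerSeries.X^(j+1)) * e1
      + (PowerSeries.C ((m+1).choose j : ℚ) * PowerSeries.C (j:ℚ) * PowerSeries.X^j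
          * (1 - PowerSeries.X)) * e2
  rw [Finset.sum_congr rfl h2, Finset.sum_add_distrib, ← Finset.mul_sum, ← Finset.mul_sum,
    sum_choose_Xpow, sum_j_choose_Xpow]

/-- For `n ≥ 1`, if `E` is the Ehrhart polynomial of the symmetric edge polytope of
`K_{2,n}`, i.e. `∑_{k≥0} E(k)t^k = ((1+t)^{n+1} + 2(n-1) t (1+t)^{n-1})/(1-t)^{n+2}`, then
`E(x) = (1/2)(2x+1) E_{1,n}(x) + (1/2) E_{1,n-1}(x)`. -/
theorem ehrhart_relation_2n (n : ℕ) (hn : 1 ≤ n) (E : Polynomial ℚ)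
    (hE : (PowerSeries.mk fun k => E.eval (k : ℚ)) *
        (1 - PowerSeries.X : PowerSeries ℚ) ^ (n + 2)
      = (1 + PowerSeries.X : PowerSeries ℚ) ^ (n + 1)
        + PowerSeries.C (2 * ((n : ℚ) - 1)) * PowerSeries.X * (1 + PowerSeries.X) ^ (n - 1)) :
    E = Polynomial.C (1 / 2 : ℚ) * ((2 * Polynomial.X + 1) * crossPoly n)
        + Polynomial.C (1 / 2 : ℚ) * crossPoly (n - 1) := by
  obtain ⟨m, rfl⟩ : ∃ m, n = m + 1 := ⟨n - 1, by omega⟩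
  set R : Polynomial ℚ :=
    Polynomial.C (1 / 2 : ℚ) * ((2 * Polynomial.X + 1) * crossPoly (m+1))
      + Polynomial.C (1 / 2 : ℚ) * crossPoly m with hRdef
  have hRval : (fun k : ℕ => R.eval (k:ℚ))
      = fun k : ℕ => 1 * ((k:ℚ) * (crossPoly (m+1)).eval (k:ℚ))
          + (1/2 : ℚ) * ((1 : ℚ) * (crossPoly (m+1)).eval (k:ℚ)
              + (1 : ℚ) * (crossPoly m).eval (k:ℚ)) := by
    funext k
    simp [hRdef]
    ring
  have hmkR : (PowerSeries.mk fun k => R.eval (k:ℚ))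
      = PowerSeries.C 1 * (PowerSeries.mk fun k => (k:ℚ) * (crossPoly (m+1)).eval (k:ℚ))
        + PowerSeries.C (1/2)
          * (PowerSeries.C 1 * (PowerSeries.mk fun k => (crossPoly (m+1)).eval (k:ℚ))
            + PowerSeries.C 1 * (PowerSeries.mk fun k => (crossPoly m).eval (k:ℚ))) := by
    rw [hRval, mk_add2]
    congr 1
    rw [mk_add2]
  have hhalf : (2 : PowerSeries ℚ) * PowerSeries.C (1/2) = 1 := by
    have h : (2 : PowerSeries ℚ) = PowerSeries.C 2 := by
      rw [map_ofNat]
    rw [h, ← map_mul]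
    norm_num
  have hRgf : (PowerSeries.mk fun k => R.eval (k:ℚ)) * (1 - PowerSeries.X)^(m+1+2)
      = (1 + PowerSeries.X : PowerSeries ℚ) ^ (m+1+1)
        + PowerSeries.C (2 * (((m+1 : ℕ) : ℚ) - 1)) * PowerSeries.X
            * (1 + PowerSeries.X) ^ (m+1-1) := by
    have e1 := mk_k_cross m
    have e2 := mk_cross (m+1)
    have e3 := mk_cross m
    rw [hmkR]
    have hred : (m+1-1) = m := rfl
    rw [hred]
    simp only [map_one, one_mul, map_mul, map_sub, map_add, map_ofNat, Nat.cast_add,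
      Nat.cast_one]
    simp only [map_one, one_mul, map_mul, map_sub, map_add, map_ofNat, Nat.cast_add,
      Nat.cast_one] at e1 e2 e3
    linear_combination e1 + PowerSeries.C (1/2) * (1 - PowerSeries.X) * e2
      + PowerSeries.C (1/2) * (1 - PowerSeries.X)^2 * e3
      + ((1 + PowerSeries.X)^m * (1 - PowerSeries.X)) * hhalf
  have hu : IsUnit ((1 - PowerSeries.X : PowerSeries ℚ)^(m+1+2)) := by
    apply IsUnit.pow
    rw [PowerSeries.isUnit_iff_constantCoeff]
    simp
  have key : (PowerSeries.mk fun k => E.eval (k:ℚ)) = PowerSeries.mk fun k => R.eval (k:ℚ) :=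
    hu.mul_right_cancel (hE.trans hRgf.symm)
  have heval : ∀ k : ℕ, E.eval (k:ℚ) = R.eval (k:ℚ) := by
    intro k
    have h := congrArg (PowerSeries.coeff k) key
    simpa [PowerSeries.coeff_mk] using h
  have hinf : (Set.range ((↑) : ℕ → ℚ)).Infinite :=
    Set.infinite_range_of_injective Nat.cast_injective
  have hER : E = R := Polynomial.eq_of_infinite_eval_eq E R
    (hinf.mono (by rintro x ⟨k, rfl⟩; exact heval k))
  rw [show m + 1 - 1 = m from rfl]
  exact hER
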